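/- arXiv:1912.04247 — 8 statements merged into one kernel-verified Lean document; each statement's English description precedes it below -/
import Mathlib

section
/- Let C be a compact convex set and D a closed convex set in R^n. Suppose sequences (v^k) in C and (w^k) in D satisfy: ||v^{k+1} - v^k|| -> 0, ||w^{k+1} - w^k|| -> 0, ||w^{k+1} - P_D(v^k)|| -> 0, and ||v^{k+1} - P_C(w^{k+1})|| -> 0. Then every cluster point v-bar of (v^k) is a fixed point of the composition P_C ∘ P_D, i.e., v-bar = P_C(P_D(v-bar)). -/
open RealInnerProductSpace

private lemma proj_inner_le {n : ℕ} {K : Set (EuclideanSpace ℝ (Fin n))}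
    (hK : Convex ℝ K) (f : EuclideanSpace ℝ (Fin n) → EuclideanSpace ℝ (Fin n))
    (hf : ∀ u, f u ∈ K ∧ ∀ z ∈ K, ‖u - f u‖ ≤ ‖u - z‖)
    (u : EuclideanSpace ℝ (Fin n)) : ∀ z ∈ K, ⟪u - f u, z - f u⟫ ≤ 0 := by
  have hmem := (hf u).1
  haveI : Nonempty K := ⟨⟨f u, hmem⟩⟩
  have hinf : ‖u - f u‖ = ⨅ z : K, ‖u - z‖ := by
    apply le_antisymm
    · exact le_ciInf fun z => (hf u).2 z z.2
    · exact ciInf_le ⟨0, fun x ⟨z, hz⟩ => hz ▸ norm_nonneg _⟩ (⟨f u, hmem⟩ : K)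
  exact (norm_eq_iInf_iff_real_inner_le_zero hK hmem).mp hinf

private lemma proj_lipschitz {n : ℕ} {K : Set (EuclideanSpace ℝ (Fin n))}
    (hK : Convex ℝ K) (f : EuclideanSpace ℝ (Fin n) → EuclideanSpace ℝ (Fin n))
    (hf : ∀ u, f u ∈ K ∧ ∀ z ∈ K, ‖u - f u‖ ≤ ‖u - z‖) : Continuous f := by
  have hlip : LipschitzWith 1 f := by
    apply LipschitzWith.of_dist_le_mul
    intro u u'
    rw [dist_eq_norm, dist_eq_norm, NNReal.coe_one, one_mul]
    set p := f u
    set p' := f u'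
    have h1 : ⟪u - p, p' - p⟫ ≤ 0 := proj_inner_le hK f hf u p' (hf u').1
    have h2 : ⟪u' - p', p - p'⟫ ≤ 0 := proj_inner_le hK f hf u' p (hf u).1
    have hsq : ‖p - p'‖ ^ 2 ≤ ⟪u - u', p - p'⟫ := by
      have e : ⟪p - p', p - p'⟫ = ⟪p - u, p - p'⟫ + ⟪u - u', p - p'⟫ + ⟪u' - p', p - p'⟫ := by
        rw [← inner_add_left, ← inner_add_left]; congr 1; abel
      have e2 : ⟪p - u, p - p'⟫ = ⟪u - p, p' - p⟫ := by
        rw [show p - u = -(u - p) by abel, show p - p' = -(p' - p) by abel, inner_neg_neg]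
      rw [← real_inner_self_eq_norm_sq, e, e2]; linarith
    have hcs : ⟪u - u', p - p'⟫ ≤ ‖u - u'‖ * ‖p - p'‖ := real_inner_le_norm _ _
    rcases eq_or_lt_of_le (norm_nonneg (p - p')) with h0 | h0
    · rw [← h0]; exact norm_nonneg _
    · nlinarith
  exact hlip.continuous

theorem stmt_2 {n : ℕ} (C D : Set (EuclideanSpace ℝ (Fin n)))
    (hCne : C.Nonempty) (hCcp : IsCompact C) (hCcv : Convex ℝ C)
    (hDne : D.Nonempty) (hDcl : IsClosed D) (hDcv : Convex ℝ D)
    (PC PD : EuclideanSpace ℝ (Fin n) → EuclideanSpace ℝ (Fin n))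
    (hPC : ∀ u, PC u ∈ C ∧ ∀ z ∈ C, ‖u - PC u‖ ≤ ‖u - z‖)
    (hPD : ∀ u, PD u ∈ D ∧ ∀ z ∈ D, ‖u - PD u‖ ≤ ‖u - z‖)
    (v w : ℕ → EuclideanSpace ℝ (Fin n))
    (hv : ∀ k, v k ∈ C) (hw : ∀ k, w k ∈ D)
    (h1 : Filter.Tendsto (fun k => ‖v (k + 1) - v k‖) Filter.atTop (nhds 0))
    (h2 : Filter.Tendsto (fun k => ‖w (k + 1) - w k‖) Filter.atTop (nhds 0))
    (h3 : Filter.Tendsto (fun k => ‖w (k + 1) - PD (v k)‖) Filter.atTop (nhds 0))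
    (h4 : Filter.Tendsto (fun k => ‖v (k + 1) - PC (w (k + 1))‖) Filter.atTop (nhds 0))
    (vbar : EuclideanSpace ℝ (Fin n))
    (hcluster : ∃ φ : ℕ → ℕ, StrictMono φ ∧
      Filter.Tendsto (fun j => v (φ j)) Filter.atTop (nhds vbar)) :
    vbar = PC (PD vbar) := by
  obtain ⟨φ, hφmono, hvlim⟩ := hcluster
  have contPC : Continuous PC := proj_lipschitz hCcv PC hPC
  have contPD : Continuous PD := proj_lipschitz hDcv PD hPD
  have hφ : Filter.Tendsto φ Filter.atTop Filter.atTop := hφmono.tendsto_atTop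
  have A : Filter.Tendsto (fun j => v (φ j + 1) - v (φ j)) Filter.atTop (nhds 0) :=
    tendsto_zero_iff_norm_tendsto_zero.mpr (h1.comp hφ)
  have hv1 : Filter.Tendsto (fun j => v (φ j + 1)) Filter.atTop (nhds vbar) := by
    have := A.add hvlim
    simpa using this
  have hPDlim : Filter.Tendsto (fun j => PD (v (φ j))) Filter.atTop (nhds (PD vbar)) :=
    (contPD.tendsto vbar).comp hvlim
  have B : Filter.Tendsto (fun j => w (φ j + 1) - PD (v (φ j))) Filter.atTop (nhds 0) :=
    tendsto_zero_iff_norm_tendsto_zero.mpr (h3.comp hφ)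
  have hw1 : Filter.Tendsto (fun j => w (φ j + 1)) Filter.atTop (nhds (PD vbar)) := by
    have := B.add hPDlim
    simpa using this
  have hPC1 : Filter.Tendsto (fun j => PC (w (φ j + 1))) Filter.atTop
      (nhds (PC (PD vbar))) := (contPC.tendsto (PD vbar)).comp hw1
  have Cc : Filter.Tendsto (fun j => v (φ j + 1) - PC (w (φ j + 1))) Filter.atTop (nhds 0) :=
    tendsto_zero_iff_norm_tendsto_zero.mpr (h4.comp hφ)
  have hv2 : Filter.Tendsto (fun j => v (φ j + 1)) Filter.atTop (nhds (PC (PD vbar))) := by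
    have := Cc.add hPC1
    simpa using this
  exact tendsto_nhds_unique hv1 hv2
end

section
/- Let C be a compact convex set and D a closed convex set in R^n, and suppose sequences (v^k) in C and (w^k) in D satisfy ||v^{k+1} - v^k|| -> 0, ||w^{k+1} - w^k|| -> 0, ||w^{k+1} - P_D(v^k)|| -> 0, and ||v^{k+1} - P_C(w^{k+1})|| -> 0. Then ||v^k - w^k|| converges to dist(C, D) := inf{||v - w|| : v in C, w in D}. -/
open RealInnerProductSpace

private lemma var_ineq {E : Type*} [NormedAddCommGroup E] [InnerProductSpace ℝ E]
    {K : Set E} (hK : Convex ℝ K) {u v : E} (hv : v ∈ K)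
    (hmin : ∀ z ∈ K, ‖u - v‖ ≤ ‖u - z‖) : ∀ z ∈ K, ⟪u - v, z - v⟫ ≤ 0 := by
  haveI : Nonempty K := ⟨⟨v, hv⟩⟩
  refine (norm_eq_iInf_iff_real_inner_le_zero hK hv).1 ?_
  refine le_antisymm (le_ciInf fun z => hmin z z.2) ?_
  have hbd : BddBelow (Set.range fun z : K => ‖u - (z : E)‖) := by
    refine ⟨0, ?_⟩
    rintro r ⟨z, rfl⟩
    exact norm_nonneg _
  exact ciInf_le hbd ⟨v, hv⟩

private lemma key_ineq {E : Type*} [NormedAddCommGroup E] [InnerProductSpace ℝ E]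
    {v w x z : E} (h5 : 0 ≤ ⟪v - w, x - v⟫) (h6 : 0 ≤ ⟪v - w, w - z⟫) :
    ‖v - w‖ ≤ ‖x - z‖ := by
  have hdec : x - z = (x - v) + (v - w) + (w - z) := by abel
  have h7 : ‖v - w‖ ^ 2 ≤ ⟪v - w, x - z⟫ := by
    rw [hdec, inner_add_right, inner_add_right, real_inner_self_eq_norm_sq]
    linarith
  have h8 := real_inner_le_norm (v - w) (x - z)
  nlinarith [norm_nonneg (v - w), norm_nonneg (x - z)]

theorem stmt_3 {n : ℕ} (C D : Set (EuclideanSpace ℝ (Fin n)))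
    (hCne : C.Nonempty) (hCcp : IsCompact C) (hCcv : Convex ℝ C)
    (hDne : D.Nonempty) (hDcl : IsClosed D) (hDcv : Convex ℝ D)
    (PC PD : EuclideanSpace ℝ (Fin n) → EuclideanSpace ℝ (Fin n))
    (hPC : ∀ u, PC u ∈ C ∧ ∀ z ∈ C, ‖u - PC u‖ ≤ ‖u - z‖)
    (hPD : ∀ u, PD u ∈ D ∧ ∀ z ∈ D, ‖u - PD u‖ ≤ ‖u - z‖)
    (v w : ℕ → EuclideanSpace ℝ (Fin n))
    (hv : ∀ k, v k ∈ C) (hw : ∀ k, w k ∈ D)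
    (h1 : Filter.Tendsto (fun k => ‖v (k + 1) - v k‖) Filter.atTop (nhds 0))
    (h2 : Filter.Tendsto (fun k => ‖w (k + 1) - w k‖) Filter.atTop (nhds 0))
    (h3 : Filter.Tendsto (fun k => ‖w (k + 1) - PD (v k)‖) Filter.atTop (nhds 0))
    (h4 : Filter.Tendsto (fun k => ‖v (k + 1) - PC (w (k + 1))‖) Filter.atTop (nhds 0)) :
    Filter.Tendsto (fun k => ‖v k - w k‖) Filter.atTop
      (nhds (sInf {r : ℝ | ∃ x ∈ C, ∃ y ∈ D, r = ‖x - y‖})) := by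
  set S : Set ℝ := {r : ℝ | ∃ x ∈ C, ∃ y ∈ D, r = ‖x - y‖} with hSdef
  have hSbdd : BddBelow S := ⟨0, by rintro r ⟨x, hx, y, hy, rfl⟩; exact norm_nonneg _⟩
  have hSne : S.Nonempty := by
    obtain ⟨x, hx⟩ := hCne; obtain ⟨y, hy⟩ := hDne
    exact ⟨‖x - y‖, x, hx, y, hy, rfl⟩
  apply Filter.tendsto_of_subseq_tendsto
  intro ns hns
  -- extract convergent subsequence of v ∘ ns
  obtain ⟨vs, hvsC, φ, hφ, hvconv⟩ :=
    hCcp.tendsto_subseq (x := fun j => v (ns j)) (fun j => hv _)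
  -- PD of points of C lies in a fixed compact set
  obtain ⟨z0, hz0⟩ := hDne
  obtain ⟨R, hR⟩ := hCcp.isBounded.subset_closedBall 0
  set R' : ℝ := 2 * R + ‖z0‖ with hR'def
  have hPDball : ∀ u ∈ C, PD u ∈ D ∩ Metric.closedBall 0 R' := by
    intro u hu
    refine ⟨(hPD u).1, ?_⟩
    rw [mem_closedBall_zero_iff]
    have ha : ‖u - PD u‖ ≤ ‖u - z0‖ := (hPD u).2 z0 hz0
    have hb : ‖u‖ ≤ R := mem_closedBall_zero_iff.1 (hR hu)
    have hc : ‖u - z0‖ ≤ ‖u‖ + ‖z0‖ := norm_sub_le _ _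
    calc ‖PD u‖ = ‖u - (u - PD u)‖ := by congr 1; abel
      _ ≤ ‖u‖ + ‖u - PD u‖ := norm_sub_le _ _
      _ ≤ R' := by rw [hR'def]; linarith
  have hKcp : IsCompact (D ∩ Metric.closedBall (0 : EuclideanSpace ℝ (Fin n)) R') :=
    (isCompact_closedBall 0 R').inter_left hDcl
  obtain ⟨ws, hws, ψ, hψ, hwconv⟩ :=
    hKcp.tendsto_subseq (x := fun j => PD (v (ns (φ j) - 1))) (fun j => hPDball _ (hv _))
  set m : ℕ → ℕ := fun j => ns (φ (ψ j)) with hm_def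
  have hm : Filter.Tendsto m Filter.atTop Filter.atTop :=
    hns.comp ((hφ.comp hψ).tendsto_atTop)
  have hm' : Filter.Tendsto (fun j => m j - 1) Filter.atTop Filter.atTop := by
    refine Filter.tendsto_atTop.2 fun b => (hm.eventually_ge_atTop (b + 1)).mono fun j hj => ?_
    omega
  have hEvIdx : ∀ᶠ j in Filter.atTop, (m j - 1) + 1 = m j :=
    (hm.eventually_ge_atTop 1).mono fun j hj => by omega
  -- translate the hypotheses along the subsequence
  have t3 : Filter.Tendsto (fun j => w (m j) - PD (v (m j - 1))) Filter.atTop (nhds 0) := by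
    rw [tendsto_zero_iff_norm_tendsto_zero]
    exact (h3.comp hm').congr' (hEvIdx.mono fun j hj => by simp only [Function.comp]; rw [hj])
  have t1 : Filter.Tendsto (fun j => v (m j) - v (m j - 1)) Filter.atTop (nhds 0) := by
    rw [tendsto_zero_iff_norm_tendsto_zero]
    exact (h1.comp hm').congr' (hEvIdx.mono fun j hj => by simp only [Function.comp]; rw [hj])
  have t4 : Filter.Tendsto (fun j => v (m j) - PC (w (m j))) Filter.atTop (nhds 0) := by
    rw [tendsto_zero_iff_norm_tendsto_zero]
    exact (h4.comp hm').congr' (hEvIdx.mono fun j hj => by simp only [Function.comp]; rw [hj])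
  have hvlim : Filter.Tendsto (fun j => v (m j)) Filter.atTop (nhds vs) :=
    hvconv.comp hψ.tendsto_atTop
  have hPDlim : Filter.Tendsto (fun j => PD (v (m j - 1))) Filter.atTop (nhds ws) := hwconv
  have hv1lim : Filter.Tendsto (fun j => v (m j - 1)) Filter.atTop (nhds vs) := by
    have h := hvlim.sub t1
    rw [sub_zero] at h
    exact h.congr fun j => by abel
  have hwlim : Filter.Tendsto (fun j => w (m j)) Filter.atTop (nhds ws) := by
    have h := hPDlim.add t3
    rw [add_zero] at h
    exact h.congr fun j => by abel
  have hPClim : Filter.Tendsto (fun j => PC (w (m j))) Filter.atTop (nhds vs) := by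
    have h := hvlim.sub t4
    rw [sub_zero] at h
    exact h.congr fun j => by abel
  have hwsD : ws ∈ D := hws.1
  -- limiting minimization properties
  have hwmin : ∀ z ∈ D, ‖vs - ws‖ ≤ ‖vs - z‖ := by
    intro z hz
    exact le_of_tendsto_of_tendsto' ((hv1lim.sub hPDlim).norm)
      ((hv1lim.sub tendsto_const_nhds).norm) (fun j => (hPD _).2 z hz)
  have hvmin : ∀ x ∈ C, ‖ws - vs‖ ≤ ‖ws - x‖ := by
    intro x hx
    exact le_of_tendsto_of_tendsto' ((hwlim.sub hPClim).norm)
      ((hwlim.sub tendsto_const_nhds).norm) (fun j => (hPC _).2 x hx)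
  have hVID := var_ineq hDcv hwsD hwmin
  have hVIC := var_ineq hCcv hvsC hvmin
  -- ‖vs - ws‖ = sInf S
  have hle : ∀ r ∈ S, ‖vs - ws‖ ≤ r := by
    rintro r ⟨x, hx, z, hz, rfl⟩
    refine key_ineq ?_ ?_
    · have h := hVIC x hx
      rw [show vs - ws = -(ws - vs) by abel, inner_neg_left]
      linarith
    · have h := hVID z hz
      rw [show ws - z = -(z - ws) by abel, inner_neg_right]
      linarith
  have hLδ : ‖vs - ws‖ = sInf S :=
    le_antisymm (le_csInf hSne hle) (csInf_le hSbdd ⟨vs, hvsC, ws, hwsD, rfl⟩)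
  refine ⟨φ ∘ ψ, ?_⟩
  rw [← hLδ]
  exact (hvlim.sub hwlim).norm
end

section
/- Let C be a nonempty closed convex subset of R^n, v in R^n, u in C, and let gamma, theta, lambda >= 0 with lambda < 1/2. Suppose w^+ in C satisfies <v - w^+, z - w^+> <= gamma ||v - u||^2 + theta ||w^+ - v||^2 + lambda ||w^+ - u||^2 for all z in C. Then for every z in C: ||w^+ - z||^2 <= ||v - z||^2 + ((2 gamma + 2 lambda)/(1 - 2 lambda)) ||v - u||^2 - ((1 - 2 theta)/(1 - 2 lambda)) ||w^+ - v||^2. -/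
theorem stmt_7 {n : ℕ} (C : Set (EuclideanSpace ℝ (Fin n)))
    (hne : C.Nonempty) (hcl : IsClosed C) (hcv : Convex ℝ C)
    (v : EuclideanSpace ℝ (Fin n)) (u : EuclideanSpace ℝ (Fin n)) (hu : u ∈ C)
    (γ θ lam : ℝ) (hγ : 0 ≤ γ) (hθ : 0 ≤ θ) (hlam : 0 ≤ lam) (hlam2 : lam < 1 / 2)
    (wplus : EuclideanSpace ℝ (Fin n)) (hwC : wplus ∈ C)
    (hinexact : ∀ z ∈ C, @inner ℝ _ _ (v - wplus) (z - wplus) ≤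
      γ * ‖v - u‖ ^ 2 + θ * ‖wplus - v‖ ^ 2 + lam * ‖wplus - u‖ ^ 2) :
    ∀ z ∈ C, ‖wplus - z‖ ^ 2 ≤ ‖v - z‖ ^ 2
      + (2 * γ + 2 * lam) / (1 - 2 * lam) * ‖v - u‖ ^ 2
      - (1 - 2 * θ) / (1 - 2 * lam) * ‖wplus - v‖ ^ 2 := by
  intro z hz
  have hpos : (0:ℝ) < 1 - 2 * lam := by linarith
  have h1 := hinexact z hz
  have h2 := hinexact u hu
  have e1 : ‖v - z‖ ^ 2 = ‖v - wplus‖ ^ 2 - 2 * @inner ℝ _ _ (v - wplus) (z - wplus)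
      + ‖z - wplus‖ ^ 2 := by
    have := norm_sub_sq_real (v - wplus) (z - wplus)
    rw [sub_sub_sub_cancel_right] at this
    linarith
  have e2 : ‖v - u‖ ^ 2 = ‖v - wplus‖ ^ 2 - 2 * @inner ℝ _ _ (v - wplus) (u - wplus)
      + ‖u - wplus‖ ^ 2 := by
    have := norm_sub_sq_real (v - wplus) (u - wplus)
    rw [sub_sub_sub_cancel_right] at this
    linarith
  rw [norm_sub_rev wplus v, norm_sub_rev wplus u] at h1 h2
  rw [norm_sub_rev wplus v, norm_sub_rev wplus z]
  have hc : (1 - 2 * lam) ≠ 0 := ne_of_gt hpos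
  have h1' : ‖z - wplus‖^2 - ‖v - z‖^2 + ‖v - wplus‖^2 ≤ 2*γ*‖v - u‖^2
      + 2*θ*‖v - wplus‖^2 + 2*lam*‖u - wplus‖^2 := by linarith
  have h2' : ‖v - wplus‖^2 + ‖u - wplus‖^2 - ‖v - u‖^2 ≤ 2*γ*‖v - u‖^2
      + 2*θ*‖v - wplus‖^2 + 2*lam*‖u - wplus‖^2 := by linarith
  have key : (1 - 2*lam) * ‖z - wplus‖^2 ≤ (1 - 2*lam) * ‖v - z‖^2
      + (2*γ + 2*lam) * ‖v - u‖^2 - (1 - 2*θ) * ‖v - wplus‖^2 := by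
    nlinarith [mul_le_mul_of_nonneg_left h1' hpos.le,
      mul_le_mul_of_nonneg_left h2' (show (0:ℝ) ≤ 2*lam by linarith)]
  have ha : (2*γ + 2*lam)/(1 - 2*lam)*‖v - u‖^2*(1 - 2*lam) = (2*γ + 2*lam)*‖v - u‖^2 := by
    field_simp
  have hb : (1 - 2*θ)/(1 - 2*lam)*‖v - wplus‖^2*(1 - 2*lam) = (1 - 2*θ)*‖v - wplus‖^2 := by
    field_simp
  nlinarith [key, ha, hb, hpos]
end

section
/- Let C be a nonempty closed convex subset of R^n, v in R^n, u in C, gamma, theta, lambda >= 0 with lambda < 1/2, and suppose w^+ in C satisfies <v - w^+, z - w^+> <= gamma ||v - u||^2 + theta ||w^+ - v||^2 + lambda ||w^+ - u||^2 for all z in C. Then ||w^+ - P_C(v)||^2 <= ((2 gamma + 2 lambda)/(1 - 2 lambda)) ||v - u||^2 + (2 theta/(1 - 2 lambda)) ||w^+ - v||^2. -/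
/-!
Write `p = P v`. The defect of the inexact projection and the variational inequality of the exact
one add up to `‖w⁺ - p‖² = ⟪v - w⁺, p - w⁺⟫ + ⟪v - p, w⁺ - p⟫ ≤ γ‖v - u‖² + θ‖w⁺ - v‖² + λ‖w⁺ - u‖²`.
Since `u ∈ C`, the projection does not move `v` away from `u`, so
`‖w⁺ - u‖² ≤ 2‖w⁺ - p‖² + 2‖p - u‖² ≤ 2‖w⁺ - p‖² + 2‖v - u‖²`; absorbing the resulting `2λ‖w⁺ - p‖²`
on the left is possible exactly because `λ < 1/2`.
-/

open RealInnerProductSpace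

variable {F : Type*} [NormedAddCommGroup F] [InnerProductSpace ℝ F]

theorem real_inner_sub_le_zero_of_forall_norm_sub_le {K : Set F} (hK : Convex ℝ K) {v p : F}
    (hp : p ∈ K) (hmin : ∀ z ∈ K, ‖v - p‖ ≤ ‖v - z‖) : ∀ z ∈ K, ⟪v - p, z - p⟫ ≤ 0 := by
  refine (norm_eq_iInf_iff_real_inner_le_zero hK hp).1 (le_antisymm ?_ ?_)
  · have : Nonempty K := ⟨⟨p, hp⟩⟩
    exact le_ciInf fun z => hmin z z.2
  · exact ciInf_le ⟨0, by rintro _ ⟨z, rfl⟩; positivity⟩ (⟨p, hp⟩ : K)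

theorem norm_sub_le_of_real_inner_le_zero {v p u : F} (h : ⟪v - p, u - p⟫ ≤ 0) :
    ‖p - u‖ ≤ ‖v - u‖ := by
  have hsplit : ‖v - u‖ ^ 2 = ‖v - p‖ ^ 2 + 2 * ⟪v - p, p - u⟫ + ‖p - u‖ ^ 2 := by
    rw [← norm_add_sq_real, sub_add_sub_cancel]
  have hflip : ⟪v - p, p - u⟫ = -⟪v - p, u - p⟫ := by
    rw [← inner_neg_right, neg_sub]
  refine (pow_le_pow_iff_left₀ (norm_nonneg _) (norm_nonneg _) two_ne_zero).1 ?_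
  linarith [sq_nonneg ‖v - p‖]

theorem norm_sub_sq_eq_real_inner_add_real_inner (v w p : F) :
    ‖w - p‖ ^ 2 = ⟪v - w, p - w⟫ + ⟪v - p, w - p⟫ := by
  rw [← neg_sub w p, inner_neg_right, neg_add_eq_sub, ← inner_sub_left, sub_sub_sub_cancel_left,
    real_inner_self_eq_norm_sq]

theorem norm_add_sq_le_two_mul (x y : F) : ‖x + y‖ ^ 2 ≤ 2 * (‖x‖ ^ 2 + ‖y‖ ^ 2) := by
  linarith [parallelogram_law_with_norm ℝ x y, sq_nonneg ‖x - y‖]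

theorem stmt_8_general {n : ℕ} (C : Set (EuclideanSpace ℝ (Fin n)))
    (hcv : Convex ℝ C)
    (P : EuclideanSpace ℝ (Fin n) → EuclideanSpace ℝ (Fin n))
    (hP : ∀ u, P u ∈ C ∧ ∀ z ∈ C, ‖u - P u‖ ≤ ‖u - z‖)
    (v : EuclideanSpace ℝ (Fin n)) (u : EuclideanSpace ℝ (Fin n)) (hu : u ∈ C)
    (γ θ lam : ℝ) (hγ : 0 ≤ γ) (hθ : 0 ≤ θ) (hlam : 0 ≤ lam) (hlam2 : lam < 1 / 2)
    (wplus : EuclideanSpace ℝ (Fin n)) (hwC : wplus ∈ C)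
    (hinexact : ∀ z ∈ C, @inner ℝ _ _ (v - wplus) (z - wplus) ≤
      γ * ‖v - u‖ ^ 2 + θ * ‖wplus - v‖ ^ 2 + lam * ‖wplus - u‖ ^ 2) :
    ‖wplus - P v‖ ^ 2 ≤ (2 * γ + 2 * lam) / (1 - 2 * lam) * ‖v - u‖ ^ 2
      + 2 * θ / (1 - 2 * lam) * ‖wplus - v‖ ^ 2 := by
  obtain ⟨hpC, hmin⟩ := hP v
  have hVI := real_inner_sub_le_zero_of_forall_norm_sub_le hcv hpC hmin
  have hwp : ‖wplus - P v‖ ^ 2 ≤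
      γ * ‖v - u‖ ^ 2 + θ * ‖wplus - v‖ ^ 2 + lam * ‖wplus - u‖ ^ 2 := by
    rw [norm_sub_sq_eq_real_inner_add_real_inner v]
    linarith [hinexact (P v) hpC, hVI wplus hwC]
  have hpu : ‖P v - u‖ ^ 2 ≤ ‖v - u‖ ^ 2 := by
    gcongr
    exact norm_sub_le_of_real_inner_le_zero (hVI u hu)
  have hwu : ‖wplus - u‖ ^ 2 ≤ 2 * (‖wplus - P v‖ ^ 2 + ‖P v - u‖ ^ 2) := by
    simpa only [sub_add_sub_cancel] using norm_add_sq_le_two_mul (wplus - P v) (P v - u)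
  rw [div_mul_eq_mul_div, div_mul_eq_mul_div, ← add_div, le_div_iff₀ (by linarith)]
  linarith [mul_le_mul_of_nonneg_left hwu hlam, mul_le_mul_of_nonneg_left hpu hlam,
    mul_nonneg hγ (sq_nonneg ‖v - u‖), mul_nonneg hθ (sq_nonneg ‖wplus - v‖)]

theorem stmt_8 {n : ℕ} (C : Set (EuclideanSpace ℝ (Fin n)))
    (hne : C.Nonempty) (hcl : IsClosed C) (hcv : Convex ℝ C)
    (P : EuclideanSpace ℝ (Fin n) → EuclideanSpace ℝ (Fin n))
    (hP : ∀ u, P u ∈ C ∧ ∀ z ∈ C, ‖u - P u‖ ≤ ‖u - z‖)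
    (v : EuclideanSpace ℝ (Fin n)) (u : EuclideanSpace ℝ (Fin n)) (hu : u ∈ C)
    (γ θ lam : ℝ) (hγ : 0 ≤ γ) (hθ : 0 ≤ θ) (hlam : 0 ≤ lam) (hlam2 : lam < 1 / 2)
    (wplus : EuclideanSpace ℝ (Fin n)) (hwC : wplus ∈ C)
    (hinexact : ∀ z ∈ C, @inner ℝ _ _ (v - wplus) (z - wplus) ≤
      γ * ‖v - u‖ ^ 2 + θ * ‖wplus - v‖ ^ 2 + lam * ‖wplus - u‖ ^ 2) :
    ‖wplus - P v‖ ^ 2 ≤ (2 * γ + 2 * lam) / (1 - 2 * lam) * ‖v - u‖ ^ 2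
      + 2 * θ / (1 - 2 * lam) * ‖wplus - v‖ ^ 2 :=
  stmt_8_general C hcv P hP v u hu γ θ lam hγ hθ hlam hlam2 wplus hwC hinexact
end

section
/- Let C be a nonempty closed convex subset of R^n, v in R^n, u in C, gamma, theta, lambda >= 0 with lambda < 1/2, and suppose w^+ in C satisfies <v - w^+, z - w^+> <= gamma ||v - u||^2 + theta ||w^+ - v||^2 + lambda ||w^+ - u||^2 for all z in C. Then ||w^+ - u||^2 <= ((1 + 2 gamma)/(1 - 2 lambda)) ||v - u||^2 - ((1 - 2 theta)/(1 - 2 lambda)) ||w^+ - v||^2. -/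
theorem stmt_9 {n : ℕ} (C : Set (EuclideanSpace ℝ (Fin n)))
    (hne : C.Nonempty) (hcl : IsClosed C) (hcv : Convex ℝ C)
    (v : EuclideanSpace ℝ (Fin n)) (u : EuclideanSpace ℝ (Fin n)) (hu : u ∈ C)
    (γ θ lam : ℝ) (hγ : 0 ≤ γ) (hθ : 0 ≤ θ) (hlam : 0 ≤ lam) (hlam2 : lam < 1 / 2)
    (wplus : EuclideanSpace ℝ (Fin n)) (hwC : wplus ∈ C)
    (hinexact : ∀ z ∈ C, @inner ℝ _ _ (v - wplus) (z - wplus) ≤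
      γ * ‖v - u‖ ^ 2 + θ * ‖wplus - v‖ ^ 2 + lam * ‖wplus - u‖ ^ 2) :
    ‖wplus - u‖ ^ 2 ≤ (1 + 2 * γ) / (1 - 2 * lam) * ‖v - u‖ ^ 2
      - (1 - 2 * θ) / (1 - 2 * lam) * ‖wplus - v‖ ^ 2 := by
  have h := hinexact u hu
  have hid : ‖v - u‖ ^ 2 = ‖v - wplus‖ ^ 2 - 2 * @inner ℝ _ _ (v - wplus) (u - wplus)
      + ‖u - wplus‖ ^ 2 := by
    have hvu : v - u = (v - wplus) - (u - wplus) := by abel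
    rw [hvu, @norm_sub_sq_real]
  have h1 : ‖v - wplus‖ = ‖wplus - v‖ := norm_sub_rev _ _
  have h2 : ‖u - wplus‖ = ‖wplus - u‖ := norm_sub_rev _ _
  rw [h1, h2] at hid
  have hc : (0:ℝ) < 1 - 2 * lam := by linarith
  rw [div_mul_eq_mul_div, div_mul_eq_mul_div, ← sub_div, le_div_iff₀ hc]
  nlinarith [h, hid]
end

section
/- Let A and B be nonempty closed convex sets in R^n with A compact and A ∩ B nonempty. Let the forcing sequences satisfy theta_k <= theta-bar < 1/2 and 2 gamma_k + 4 lambda_k < sigma < 1 for all k, with gamma_k, theta_k, lambda_k >= 0. Suppose sequences (x^k) in A and (y^k) in B satisfy y^{k+1} = P_B(x^k) and x^{k+1} in A is an inexact projection of y^{k+1} onto A relative to x^k, i.e., <y^{k+1} - x^{k+1}, z - x^{k+1}> <= gamma_k ||y^{k+1} - x^k||^2 + theta_k ||x^{k+1} - y^{k+1}||^2 + lambda_k ||x^{k+1} - x^k||^2 for all z in A. Then for every x-bar in A ∩ B: ||x^{k+1} - x-bar||^2 <= ||x^k - x-bar||^2 - ((1 - 2 gamma_k - 4 lambda_k)/(1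 - 2 lambda_k)) ||x^k - y^{k+1}||^2 - ((1 - 2 theta_k)/(1 - 2 lambda_k)) ||x^{k+1} - y^{k+1}||^2; in particular (x^k) is Fejér convergent to A ∩ B. -/
theorem stmt_13 {n : ℕ} (A B : Set (EuclideanSpace ℝ (Fin n)))
    (hAne : A.Nonempty) (hAcp : IsCompact A) (hAcv : Convex ℝ A) (hAcl : IsClosed A)
    (hBne : B.Nonempty) (hBcl : IsClosed B) (hBcv : Convex ℝ B)
    (hAB : (A ∩ B).Nonempty)
    (PB : EuclideanSpace ℝ (Fin n) → EuclideanSpace ℝ (Fin n))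
    (hPB : ∀ u, PB u ∈ B ∧ ∀ z ∈ B, ‖u - PB u‖ ≤ ‖u - z‖)
    (γ θ lam : ℕ → ℝ) (hγ : ∀ k, 0 ≤ γ k) (hθ : ∀ k, 0 ≤ θ k) (hlam : ∀ k, 0 ≤ lam k)
    (θbar σ : ℝ) (hθbar : θbar < 1 / 2) (hσ : σ < 1)
    (hθb : ∀ k, θ k ≤ θbar) (hσb : ∀ k, 2 * γ k + 4 * lam k < σ)
    (x y : ℕ → EuclideanSpace ℝ (Fin n))
    (hx : ∀ k, x k ∈ A) (hy : ∀ k, y k ∈ B)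
    (hyk : ∀ k, y (k + 1) = PB (x k))
    (hxk : ∀ k, ∀ z ∈ A, @inner ℝ _ _ (y (k + 1) - x (k + 1)) (z - x (k + 1)) ≤
      γ k * ‖y (k + 1) - x k‖ ^ 2 + θ k * ‖x (k + 1) - y (k + 1)‖ ^ 2
        + lam k * ‖x (k + 1) - x k‖ ^ 2) :
    ∀ xbar ∈ A ∩ B, (∀ k : ℕ,
      ‖x (k + 1) - xbar‖ ^ 2 ≤ ‖x k - xbar‖ ^ 2
        - (1 - 2 * γ k - 4 * lam k) / (1 - 2 * lam k) * ‖x k - y (k + 1)‖ ^ 2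
        - (1 - 2 * θ k) / (1 - 2 * lam k) * ‖x (k + 1) - y (k + 1)‖ ^ 2) ∧
      ∀ k : ℕ, ‖x (k + 1) - xbar‖ ≤ ‖x k - xbar‖ := by
  intro xbar hxbar
  obtain ⟨hxA, hxB⟩ := hxbar
  have key : ∀ k : ℕ,
      ‖x (k + 1) - xbar‖ ^ 2 ≤ ‖x k - xbar‖ ^ 2
        - (1 - 2 * γ k - 4 * lam k) / (1 - 2 * lam k) * ‖x k - y (k + 1)‖ ^ 2
        - (1 - 2 * θ k) / (1 - 2 * lam k) * ‖x (k + 1) - y (k + 1)‖ ^ 2 := by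
    intro k
    have hd : 0 < 1 - 2 * lam k := by nlinarith [hσb k, hγ k, hlam k]
    -- projection variational inequality
    have hvmin : ∀ z ∈ B, ‖x k - y (k + 1)‖ ≤ ‖x k - z‖ := by
      intro z hz; rw [hyk k]; exact (hPB (x k)).2 z hz
    have hvB : y (k + 1) ∈ B := hy (k + 1)
    haveI : Nonempty B := ⟨⟨y (k + 1), hvB⟩⟩
    have hinf : ‖x k - y (k + 1)‖ = ⨅ z : B, ‖x k - z‖ :=
      le_antisymm (le_ciInf fun z => hvmin z z.2)
        (ciInf_le ⟨0, fun r ⟨z, hz⟩ => hz ▸ norm_nonneg _⟩ (⟨y (k + 1), hvB⟩ : B))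
    have h1 : @inner ℝ _ _ (x k - y (k + 1)) (xbar - y (k + 1)) ≤ (0 : ℝ) :=
      (norm_eq_iInf_iff_real_inner_le_zero hBcv hvB).mp hinf xbar hxB
    have h2 := hxk k xbar hxA
    have h3 := hxk k (x k) (hx k)
    have hr1 : ‖y (k + 1) - x k‖ ^ 2 = ‖x k - y (k + 1)‖ ^ 2 := by rw [norm_sub_rev]
    rw [hr1] at h2 h3
    -- polarization identities
    have E1 : ‖x k - xbar‖ ^ 2 = ‖x k - y (k + 1)‖ ^ 2
        + 2 * @inner ℝ _ _ (x k - y (k + 1)) (y (k + 1) - xbar) + ‖y (k + 1) - xbar‖ ^ 2 := by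
      rw [show x k - xbar = (x k - y (k + 1)) + (y (k + 1) - xbar) by abel, norm_add_sq_real]
    have E2 : ‖y (k + 1) - xbar‖ ^ 2 = ‖y (k + 1) - x (k + 1)‖ ^ 2
        + 2 * @inner ℝ _ _ (y (k + 1) - x (k + 1)) (x (k + 1) - xbar)
        + ‖x (k + 1) - xbar‖ ^ 2 := by
      rw [show y (k + 1) - xbar = (y (k + 1) - x (k + 1)) + (x (k + 1) - xbar) by abel,
        norm_add_sq_real]
    have E3 : ‖x k - y (k + 1)‖ ^ 2 = ‖y (k + 1) - x (k + 1)‖ ^ 2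
        + 2 * @inner ℝ _ _ (y (k + 1) - x (k + 1)) (x (k + 1) - x k)
        + ‖x (k + 1) - x k‖ ^ 2 := by
      rw [← hr1, show y (k + 1) - x k = (y (k + 1) - x (k + 1)) + (x (k + 1) - x k) by abel,
        norm_add_sq_real]
    have I1 : @inner ℝ _ _ (x k - y (k + 1)) (y (k + 1) - xbar)
        = -(@inner ℝ _ _ (x k - y (k + 1)) (xbar - y (k + 1))) := by
      rw [show y (k + 1) - xbar = -(xbar - y (k + 1)) by abel, inner_neg_right]
    have I2 : @inner ℝ _ _ (y (k + 1) - x (k + 1)) (x (k + 1) - xbar)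
        = -(@inner ℝ _ _ (y (k + 1) - x (k + 1)) (xbar - x (k + 1))) := by
      rw [show x (k + 1) - xbar = -(xbar - x (k + 1)) by abel, inner_neg_right]
    have I3 : @inner ℝ _ _ (y (k + 1) - x (k + 1)) (x (k + 1) - x k)
        = -(@inner ℝ _ _ (y (k + 1) - x (k + 1)) (x k - x (k + 1))) := by
      rw [show x (k + 1) - x k = -(x k - x (k + 1)) by abel, inner_neg_right]
    have hr2 : ‖y (k + 1) - x (k + 1)‖ ^ 2 = ‖x (k + 1) - y (k + 1)‖ ^ 2 := by
      rw [norm_sub_rev]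
    rw [hr2] at E2 E3
    have hW : ‖x (k + 1) - xbar‖ ^ 2 ≤ ‖x k - xbar‖ ^ 2
        - (1 - 2 * γ k) * ‖x k - y (k + 1)‖ ^ 2
        - (1 - 2 * θ k) * ‖x (k + 1) - y (k + 1)‖ ^ 2
        + 2 * lam k * ‖x (k + 1) - x k‖ ^ 2 := by
      linarith [E1, E2, I1, I2, h1, h2]
    have hc : (1 - 2 * lam k) * ‖x (k + 1) - x k‖ ^ 2 ≤
        (1 + 2 * γ k) * ‖x k - y (k + 1)‖ ^ 2
        - (1 - 2 * θ k) * ‖x (k + 1) - y (k + 1)‖ ^ 2 := by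
      linarith [E3, I3, h3]
    have h4 : 2 * lam k * ‖x (k + 1) - x k‖ ^ 2 ≤
        2 * lam k / (1 - 2 * lam k) *
          ((1 + 2 * γ k) * ‖x k - y (k + 1)‖ ^ 2
            - (1 - 2 * θ k) * ‖x (k + 1) - y (k + 1)‖ ^ 2) := by
      rw [div_mul_eq_mul_div, le_div_iff₀ hd]
      nlinarith [mul_le_mul_of_nonneg_left hc (show (0:ℝ) ≤ 2 * lam k by linarith [hlam k])]
    have heq : ‖x k - xbar‖ ^ 2 - (1 - 2 * γ k) * ‖x k - y (k + 1)‖ ^ 2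
        - (1 - 2 * θ k) * ‖x (k + 1) - y (k + 1)‖ ^ 2
        + 2 * lam k / (1 - 2 * lam k) *
          ((1 + 2 * γ k) * ‖x k - y (k + 1)‖ ^ 2
            - (1 - 2 * θ k) * ‖x (k + 1) - y (k + 1)‖ ^ 2)
        = ‖x k - xbar‖ ^ 2
          - (1 - 2 * γ k - 4 * lam k) / (1 - 2 * lam k) * ‖x k - y (k + 1)‖ ^ 2
          - (1 - 2 * θ k) / (1 - 2 * lam k) * ‖x (k + 1) - y (k + 1)‖ ^ 2 := by
      field_simp
      ring
    linarith [hW, h4, heq.le]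
  refine ⟨key, fun k => ?_⟩
  have hd : 0 < 1 - 2 * lam k := by nlinarith [hσb k, hγ k, hlam k]
  have t1 : 0 ≤ (1 - 2 * γ k - 4 * lam k) / (1 - 2 * lam k) * ‖x k - y (k + 1)‖ ^ 2 :=
    mul_nonneg (div_nonneg (by linarith [hσb k]) hd.le) (by positivity)
  have t2 : 0 ≤ (1 - 2 * θ k) / (1 - 2 * lam k) * ‖x (k + 1) - y (k + 1)‖ ^ 2 :=
    mul_nonneg (div_nonneg (by linarith [hθb k]) hd.le) (by positivity)
  have hsq : ‖x (k + 1) - xbar‖ ^ 2 ≤ ‖x k - xbar‖ ^ 2 := by linarith [key k]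
  calc ‖x (k + 1) - xbar‖ = Real.sqrt (‖x (k + 1) - xbar‖ ^ 2) := by
        rw [Real.sqrt_sq (norm_nonneg _)]
    _ ≤ Real.sqrt (‖x k - xbar‖ ^ 2) := Real.sqrt_le_sqrt hsq
    _ = ‖x k - xbar‖ := Real.sqrt_sq (norm_nonneg _)
end

section
/- Let A and B be nonempty closed convex sets in R^n with A compact and A ∩ B nonempty. Suppose (x^k) in A and (y^k) in B are generated by: y^{k+1} = P_B(x^k) and x^{k+1} is an inexact projection of y^{k+1} onto A relative to x^k with nonnegative forcing parameters satisfying theta_k <= theta-bar < 1/2 and 2 gamma_k + 4 lambda_k < sigma < 1 for all k (in the sense <y^{k+1} - x^{k+1}, z - x^{k+1}> <= gamma_k ||y^{k+1} - x^k||^2 + theta_k ||x^{k+1} - y^{k+1}||^2 + lambda_k ||x^{k+1} - x^k||^2 for all z in A). Then (x^k) and (y^k) both converge to a common point in A ∩ B. -/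
/-!
Fix `p ∈ A ∩ B` and write `y = P_B x`, `x'` for the next iterate. Expanding `‖x - p‖²` through `y`
and `‖y - p‖²` through `x'`, the projection inequality and the inexact-projection inequality at `p`
give `‖x' - p‖² ≤ ‖x - p‖² - ‖y - x‖² - ‖x' - y‖² + 2E`, where `E` is the error bound. The same
inequality tested at `z = x` bounds `‖x' - x‖²` by `E` itself, and the parameter bounds then give
`2E ≤ σ ‖y - x‖² + ‖x' - y‖²`. Hence `(x^k)` is Fejér monotone with respect to `A ∩ B` with summable
gaps `‖y^{k+1} - x^k‖²`. A cluster point of `(x^k)` in the compact set `A` is then also a limit of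
`(y^k)`, so it lies in `A ∩ B`, and Fejér monotonicity upgrades the subsequence to the whole
sequence.
-/

open Filter Topology RealInnerProductSpace

theorem real_inner_sub_nonpos_of_forall_norm_sub_le {F : Type*} [NormedAddCommGroup F]
    [InnerProductSpace ℝ F] {K : Set F} (hK : Convex ℝ K) {u v : F} (hv : v ∈ K)
    (hmin : ∀ w ∈ K, ‖u - v‖ ≤ ‖u - w‖) : ∀ w ∈ K, ⟪u - v, w - v⟫ ≤ 0 := by
  have : Nonempty K := ⟨⟨v, hv⟩⟩
  refine (norm_eq_iInf_iff_real_inner_le_zero hK hv).1 (le_antisymm ?_ ?_)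
  · exact le_ciInf fun w => hmin w w.2
  · exact ciInf_le ⟨0, by rintro _ ⟨w, rfl⟩; exact norm_nonneg _⟩ (⟨v, hv⟩ : K)

theorem two_mul_le_of_le_of_le_sub_add {g t l s X Y Z E : ℝ} (hX : 0 ≤ X) (hY : 0 ≤ Y)
    (hg : 0 ≤ g) (hl : 0 ≤ l) (ht : t ≤ 1 / 2) (hgls : 2 * g + 4 * l ≤ s) (hs : s ≤ 1)
    (hE : E ≤ g * X + t * Y + l * Z) (hZ : Z ≤ X - Y + 2 * E) : 2 * E ≤ s * X + Y := by
  have hl' : 0 < 1 - 2 * l := by linarith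
  have hE' : (1 - 2 * l) * E ≤ (g + l) * X + (t - l) * Y := by nlinarith
  have hXcoef : 2 * (g + l) ≤ (1 - 2 * l) * s := by nlinarith
  refine le_of_mul_le_mul_left ?_ hl'
  nlinarith

theorem norm_sub_sq_add_le_of_inexact_proj {F : Type*} [NormedAddCommGroup F]
    [InnerProductSpace ℝ F] {x y x' p : F} {g t l s E : ℝ} (hg : 0 ≤ g) (hl : 0 ≤ l)
    (ht : t ≤ 1 / 2) (hgls : 2 * g + 4 * l ≤ s) (hs : s ≤ 1)
    (hE : E ≤ g * ‖y - x‖ ^ 2 + t * ‖x' - y‖ ^ 2 + l * ‖x' - x‖ ^ 2)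
    (hy : ⟪x - y, p - y⟫ ≤ 0) (hp : ⟪y - x', p - x'⟫ ≤ E) (hx : ⟪y - x', x - x'⟫ ≤ E) :
    ‖x' - p‖ ^ 2 + (1 - s) * ‖y - x‖ ^ 2 ≤ ‖x - p‖ ^ 2 := by
  have hxp : ‖x - p‖ ^ 2 = ‖y - x‖ ^ 2 - 2 * ⟪x - y, p - y⟫ + ‖y - p‖ ^ 2 := by
    rw [norm_sub_rev y x, norm_sub_rev y p, ← norm_sub_sq_real, sub_sub_sub_cancel_right]
  have hyp : ‖y - p‖ ^ 2 = ‖x' - y‖ ^ 2 - 2 * ⟪y - x', p - x'⟫ + ‖x' - p‖ ^ 2 := by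
    rw [norm_sub_rev x' y, norm_sub_rev x' p, ← norm_sub_sq_real, sub_sub_sub_cancel_right]
  have hyx : ‖y - x‖ ^ 2 = ‖x' - y‖ ^ 2 - 2 * ⟪y - x', x - x'⟫ + ‖x' - x‖ ^ 2 := by
    rw [norm_sub_rev x' y, norm_sub_rev x' x, ← norm_sub_sq_real, sub_sub_sub_cancel_right]
  have hE2 : 2 * E ≤ s * ‖y - x‖ ^ 2 + ‖x' - y‖ ^ 2 :=
    two_mul_le_of_le_of_le_sub_add (sq_nonneg _) (sq_nonneg _) hg hl ht hgls hs hE (by linarith)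
  linarith

theorem summable_of_add_mul_le {f D : ℕ → ℝ} {c : ℝ} (hc : 0 < c) (hf : ∀ k, 0 ≤ f k)
    (hD : ∀ k, 0 ≤ D k) (h : ∀ k, f (k + 1) + c * D k ≤ f k) : Summable D := by
  refine summable_of_sum_range_le (c := f 0 / c) hD fun N => ?_
  have htel : c * ∑ k ∈ Finset.range N, D k ≤ f 0 - f N := by
    rw [Finset.mul_sum, ← Finset.sum_range_sub']
    exact Finset.sum_le_sum fun k _ => by linarith [h k]
  rw [le_div_iff₀' hc]
  linarith [hf N]

theorem exists_tendsto_of_antitone_dist {X : Type*} [PseudoMetricSpace X] {A B : Set X}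
    (hA : IsCompact A) (hB : IsClosed B) {x y : ℕ → X} (hx : ∀ k, x k ∈ A) (hy : ∀ k, y k ∈ B)
    (hgap : Tendsto (fun k => dist (x k) (y (k + 1))) atTop (𝓝 0))
    (hmono : ∀ p ∈ A ∩ B, Antitone fun k => dist (x k) p) :
    ∃ p ∈ A ∩ B, Tendsto x atTop (𝓝 p) ∧ Tendsto y atTop (𝓝 p) := by
  obtain ⟨q, hqA, φ, hφ, hxφ⟩ := hA.tendsto_subseq hx
  have hyφ : Tendsto (fun j => y (φ j + 1)) atTop (𝓝 q) :=
    hxφ.congr_dist (hgap.comp hφ.tendsto_atTop)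
  have hqB : q ∈ B := hB.mem_of_tendsto hyφ (Eventually.of_forall fun j => hy _)
  have hxq : Tendsto x atTop (𝓝 q) := by
    rw [tendsto_iff_dist_tendsto_zero, tendsto_iff_tendsto_subseq_of_antitone
      (hmono q ⟨hqA, hqB⟩) hφ.tendsto_atTop]
    exact tendsto_iff_dist_tendsto_zero.1 hxφ
  exact ⟨q, ⟨hqA, hqB⟩, hxq, (tendsto_add_atTop_iff_nat 1).1 (hxq.congr_dist hgap)⟩

theorem stmt_14_general {n : ℕ} (A B : Set (EuclideanSpace ℝ (Fin n)))
    (hAcp : IsCompact A)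
    (hBcl : IsClosed B) (hBcv : Convex ℝ B)
    (hAB : (A ∩ B).Nonempty)
    (PB : EuclideanSpace ℝ (Fin n) → EuclideanSpace ℝ (Fin n))
    (hPB : ∀ u, PB u ∈ B ∧ ∀ z ∈ B, ‖u - PB u‖ ≤ ‖u - z‖)
    (γ θ lam : ℕ → ℝ) (hγ : ∀ k, 0 ≤ γ k) (hlam : ∀ k, 0 ≤ lam k)
    (θbar σ : ℝ) (hθbar : θbar < 1 / 2) (hσ : σ < 1)
    (hθb : ∀ k, θ k ≤ θbar) (hσb : ∀ k, 2 * γ k + 4 * lam k < σ)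
    (x y : ℕ → EuclideanSpace ℝ (Fin n))
    (hx : ∀ k, x k ∈ A) (hy : ∀ k, y k ∈ B)
    (hyk : ∀ k, y (k + 1) = PB (x k))
    (hxk : ∀ k, ∀ z ∈ A, @inner ℝ _ _ (y (k + 1) - x (k + 1)) (z - x (k + 1)) ≤
      γ k * ‖y (k + 1) - x k‖ ^ 2 + θ k * ‖x (k + 1) - y (k + 1)‖ ^ 2
        + lam k * ‖x (k + 1) - x k‖ ^ 2) :
    ∃ p ∈ A ∩ B, Filter.Tendsto x Filter.atTop (nhds p) ∧
      Filter.Tendsto y Filter.atTop (nhds p) := by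
  have hfejer : ∀ p ∈ A ∩ B, ∀ k,
      ‖x (k + 1) - p‖ ^ 2 + (1 - σ) * ‖y (k + 1) - x k‖ ^ 2 ≤ ‖x k - p‖ ^ 2 := by
    rintro p ⟨hpA, hpB⟩ k
    have hproj := real_inner_sub_nonpos_of_forall_norm_sub_le hBcv (hPB (x k)).1 (hPB (x k)).2
      p hpB
    rw [← hyk] at hproj
    exact norm_sub_sq_add_le_of_inexact_proj (hγ k) (hlam k) (by linarith [hθb k]) (hσb k).le
      hσ.le le_rfl hproj (hxk k p hpA) (hxk k (x k) (hx k))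
  obtain ⟨p₀, hp₀⟩ := hAB
  have hgap : Tendsto (fun k => dist (x k) (y (k + 1))) atTop (𝓝 0) := by
    have hsum : Summable fun k => ‖y (k + 1) - x k‖ ^ 2 :=
      summable_of_add_mul_le (f := fun k => ‖x k - p₀‖ ^ 2) (sub_pos.2 hσ)
        (fun k => sq_nonneg _) (fun k => sq_nonneg _) (hfejer p₀ hp₀)
    simpa [dist_eq_norm', Real.sqrt_sq_eq_abs] using hsum.tendsto_atTop_zero.sqrt
  refine exists_tendsto_of_antitone_dist hAcp hBcl hx hy hgap fun p hp =>
    antitone_nat_of_succ_le fun k => ?_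
  rw [dist_eq_norm, dist_eq_norm, ← sq_le_sq₀ (norm_nonneg _) (norm_nonneg _)]
  nlinarith [hfejer p hp k]

theorem stmt_14 {n : ℕ} (A B : Set (EuclideanSpace ℝ (Fin n)))
    (hAne : A.Nonempty) (hAcp : IsCompact A) (hAcv : Convex ℝ A) (hAcl : IsClosed A)
    (hBne : B.Nonempty) (hBcl : IsClosed B) (hBcv : Convex ℝ B)
    (hAB : (A ∩ B).Nonempty)
    (PB : EuclideanSpace ℝ (Fin n) → EuclideanSpace ℝ (Fin n))
    (hPB : ∀ u, PB u ∈ B ∧ ∀ z ∈ B, ‖u - PB u‖ ≤ ‖u - z‖)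
    (γ θ lam : ℕ → ℝ) (hγ : ∀ k, 0 ≤ γ k) (hθ : ∀ k, 0 ≤ θ k) (hlam : ∀ k, 0 ≤ lam k)
    (θbar σ : ℝ) (hθbar : θbar < 1 / 2) (hσ : σ < 1)
    (hθb : ∀ k, θ k ≤ θbar) (hσb : ∀ k, 2 * γ k + 4 * lam k < σ)
    (x y : ℕ → EuclideanSpace ℝ (Fin n))
    (hx : ∀ k, x k ∈ A) (hy : ∀ k, y k ∈ B)
    (hyk : ∀ k, y (k + 1) = PB (x k))
    (hxk : ∀ k, ∀ z ∈ A, @inner ℝ _ _ (y (k + 1) - x (k + 1)) (z - x (k + 1)) ≤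
      γ k * ‖y (k + 1) - x k‖ ^ 2 + θ k * ‖x (k + 1) - y (k + 1)‖ ^ 2
        + lam k * ‖x (k + 1) - x k‖ ^ 2) :
    ∃ p ∈ A ∩ B, Filter.Tendsto x Filter.atTop (nhds p) ∧
      Filter.Tendsto y Filter.atTop (nhds p) :=
  stmt_14_general A B hAcp hBcl hBcv hAB PB hPB γ θ lam hγ hlam θbar σ hθbar hσ hθb hσb x y hx hy
    hyk hxk
end

section
/- Let A be a nonempty compact convex set and B a nonempty closed convex set in R^n with A ∩ B empty. If x* in A is a fixed point of P_A ∘ P_B (i.e., x* = P_A(P_B(x*))) and y* := P_B(x*), then ||x* - y*|| = dist(A, B) and y* = P_B(P_A(y*)). -/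
open scoped RealInnerProductSpace

lemma proj_var_ineq {n : ℕ} {K : Set (EuclideanSpace ℝ (Fin n))} (hK : Convex ℝ K)
    {u p : EuclideanSpace ℝ (Fin n)} (hp : p ∈ K)
    (hmin : ∀ z ∈ K, ‖u - p‖ ≤ ‖u - z‖) :
    ∀ w ∈ K, ⟪u - p, w - p⟫ ≤ 0 := by
  rw [← norm_eq_iInf_iff_real_inner_le_zero hK hp]
  haveI : Nonempty K := ⟨⟨p, hp⟩⟩
  apply le_antisymm
  · exact le_ciInf fun w => hmin w w.2
  · have hbdd : BddBelow (Set.range fun w : K => ‖u - (w : EuclideanSpace ℝ (Fin n))‖) :=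
      ⟨0, by rintro r ⟨w, rfl⟩; exact norm_nonneg _⟩
    exact ciInf_le hbdd ⟨p, hp⟩

theorem stmt_19 {n : ℕ} (A B : Set (EuclideanSpace ℝ (Fin n)))
    (hAne : A.Nonempty) (hAcp : IsCompact A) (hAcv : Convex ℝ A)
    (hBne : B.Nonempty) (hBcl : IsClosed B) (hBcv : Convex ℝ B)
    (hAB : A ∩ B = ∅)
    (PA PB : EuclideanSpace ℝ (Fin n) → EuclideanSpace ℝ (Fin n))
    (hPA : ∀ u, PA u ∈ A ∧ ∀ z ∈ A, ‖u - PA u‖ ≤ ‖u - z‖)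
    (hPB : ∀ u, PB u ∈ B ∧ ∀ z ∈ B, ‖u - PB u‖ ≤ ‖u - z‖)
    (xstar : EuclideanSpace ℝ (Fin n)) (hx : xstar ∈ A)
    (hfix : xstar = PA (PB xstar))
    (ystar : EuclideanSpace ℝ (Fin n)) (hy : ystar = PB xstar) :
    ‖xstar - ystar‖ = sInf {r : ℝ | ∃ a ∈ A, ∃ b ∈ B, r = ‖a - b‖} ∧
      ystar = PB (PA ystar) := by
  have hxPA : xstar = PA ystar := by rw [hy]; exact hfix
  have hyB : ystar ∈ B := hy ▸ (hPB xstar).1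
  have hA : ∀ a ∈ A, ⟪ystar - xstar, a - xstar⟫ ≤ 0 := by
    have hmin := (hPA ystar).2
    rw [← hxPA] at hmin
    exact proj_var_ineq hAcv hx hmin
  have hB : ∀ b ∈ B, ⟪xstar - ystar, b - ystar⟫ ≤ 0 := by
    have h2 := (hPB xstar).2
    rw [← hy] at h2
    exact proj_var_ineq hBcv hyB h2
  have key : ∀ a ∈ A, ∀ b ∈ B, ‖xstar - ystar‖ ≤ ‖a - b‖ := by
    intro a ha b hb
    set v := xstar - ystar with hv
    have hA' : 0 ≤ ⟪v, a - xstar⟫ := by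
      have h := hA a ha
      have h2 : ⟪-v, a - xstar⟫ ≤ 0 := by rwa [hv, neg_sub]
      rw [inner_neg_left] at h2; linarith
    have hB' : 0 ≤ ⟪v, ystar - b⟫ := by
      have h := hB b hb
      have h2 : ⟪v, -(b - ystar)⟫ ≥ 0 := by rw [inner_neg_right]; linarith
      rwa [neg_sub] at h2
    have h1 : ‖v‖ ^ 2 ≤ ⟪v, a - b⟫ := by
      have e : a - b = (a - xstar) + v + (ystar - b) := by rw [hv]; abel
      rw [e, inner_add_right, inner_add_right, real_inner_self_eq_norm_sq]
      linarith
    have h2 : ⟪v, a - b⟫ ≤ ‖v‖ * ‖a - b‖ := real_inner_le_norm _ _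
    nlinarith [norm_nonneg v, norm_nonneg (a - b)]
  constructor
  · apply le_antisymm
    · refine le_csInf ⟨‖xstar - ystar‖, ⟨xstar, hx, ystar, hyB, rfl⟩⟩ ?_
      rintro r ⟨a, ha, b, hb, rfl⟩
      exact key a ha b hb
    · exact csInf_le ⟨‖xstar - ystar‖, by rintro r ⟨a, ha, b, hb, rfl⟩; exact key a ha b hb⟩
        ⟨xstar, hx, ystar, hyB, rfl⟩
  · rw [← hxPA, ← hy]
end
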